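/- Let q be a primitive n-th root of unity with n > 1, and let f ∈ k[t] be nonzero. Then f(u) and f(v) are both central in B_q(f) if and only if n divides j for every j ∈ supp(f). -/

import Mathlib

/-!
If `w u = c • u w + d` with `d` commuting with `u`, then
`w u^(j+1) = c^(j+1) • u^(j+1) w + (1 + c + ⋯ + c^j) • u^j d`. For `c` a primitive `n`-th root
of unity and `n ∣ j` the two scalars become `1` and `0`, so `w` commutes with `u^j`. Applied to
the defining relations of `B_q(f)` (and to `v u = q⁻¹ • u v`, `u v = q • v u`), this shows that
`f(u)` and `f(v)` commute with all three generators when `n` divides every exponent of `f`.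

Conversely, `B_q(f)` acts on the quantum plane `k_q[u, v] = B_q(f) / B_q(f) w`, with `w` acting
as the `q`-skew derivation `δ`. Comparing `v f(u) • 1` with `f(u) v • 1` coefficient by
coefficient gives `q⁻ʲ c_j = c_j`, hence `q^j = 1`, i.e. `n ∣ j`, for every `j` in the support.
-/

noncomputable section

open FreeAlgebra Polynomial

/-- The defining relations of the algebra `B_q(f)`:
`uv = q·vu`, `wu = q·uw + f(v)`, `wv = q⁻¹·vw + f(u)`,
where `u, v, w` are the generators `ι 0, ι 1, ι 2` of the free algebra. -/
inductive BRel (k : Type*) [Field k] (q : k) (f : Polynomial k) :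
    FreeAlgebra k (Fin 3) → FreeAlgebra k (Fin 3) → Prop
  | uv : BRel k q f (ι k 0 * ι k 1) (q • (ι k 1 * ι k 0))
  | wu : BRel k q f (ι k 2 * ι k 0) (q • (ι k 0 * ι k 2) + aeval (ι k 1) f)
  | wv : BRel k q f (ι k 2 * ι k 1) (q⁻¹ • (ι k 1 * ι k 2) + aeval (ι k 0) f)

/-- The algebra `B_q(f)`. -/
abbrev BAlg (k : Type*) [Field k] (q : k) (f : Polynomial k) := RingQuot (BRel k q f)

def Bu (k : Type*) [Field k] (q : k) (f : Polynomial k) : BAlg k q f :=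
  RingQuot.mkAlgHom k (BRel k q f) (ι k 0)
def Bv (k : Type*) [Field k] (q : k) (f : Polynomial k) : BAlg k q f :=
  RingQuot.mkAlgHom k (BRel k q f) (ι k 1)
def Bw (k : Type*) [Field k] (q : k) (f : Polynomial k) : BAlg k q f :=
  RingQuot.mkAlgHom k (BRel k q f) (ι k 2)

open Finset

section SkewCommutation

variable {R A : Type*} [CommRing R] [Ring A] [Algebra R A]

theorem Polynomial.commute_aeval_of_forall_mem_support {x y : A} {p : R[X]}
    (h : ∀ j ∈ p.support, Commute y (x ^ j)) : Commute y (aeval x p) := by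
  rw [aeval_def, eval₂_eq_sum, Polynomial.sum_def]
  exact Commute.sum_right _ _ _ fun j hj =>
    (Algebra.commute_algebraMap_right _ y).mul_right (h j hj)

theorem mul_pow_succ_of_mul_eq_smul_add {w u d : A} {c : R} (h : w * u = c • (u * w) + d)
    (hd : Commute d u) (j : ℕ) :
    w * u ^ (j + 1) =
      c ^ (j + 1) • (u ^ (j + 1) * w) + (∑ i ∈ range (j + 1), c ^ i) • (u ^ j * d) := by
  induction j with
  | zero => simpa using h
  | succ j ih =>
    calc w * u ^ (j + 1 + 1)
        = c ^ (j + 1) • (u ^ (j + 1) * (w * u)) +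
            (∑ i ∈ range (j + 1), c ^ i) • (u ^ (j + 1) * d) := by
          rw [pow_succ u (j + 1), ← mul_assoc, ih, add_mul, smul_mul_assoc, smul_mul_assoc,
            mul_assoc, mul_assoc, hd.eq, ← mul_assoc (u ^ j), ← pow_succ]
      _ = c ^ (j + 1 + 1) • (u ^ (j + 1 + 1) * w) +
            (∑ i ∈ range (j + 1 + 1), c ^ i) • (u ^ (j + 1) * d) := by
          rw [h, mul_add, mul_smul_comm, ← mul_assoc, ← pow_succ, sum_range_succ _ (j + 1)]
          module

theorem commute_pow_of_mul_eq_smul_add {w u d : A} {c : R} (h : w * u = c • (u * w) + d)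
    (hd : Commute d u) {j : ℕ} (hc : c ^ j = 1) (hs : ∑ i ∈ range j, c ^ i = 0) :
    Commute w (u ^ j) := by
  cases j with
  | zero => exact pow_zero u ▸ Commute.one_right w
  | succ j =>
    rw [Commute, SemiconjBy, mul_pow_succ_of_mul_eq_smul_add h hd, hc, hs, one_smul,
      zero_smul, add_zero]

end SkewCommutation

theorem IsPrimitiveRoot.geom_sum_eq_zero_of_dvd {R : Type*} [CommRing R] [IsDomain R]
    {ζ : R} {n j : ℕ} (hζ : IsPrimitiveRoot ζ n) (hn : 1 < n) (hj : n ∣ j) :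
    ∑ i ∈ range j, ζ ^ i = 0 := by
  have h := geom_sum_mul ζ j
  rw [(hζ.pow_eq_one_iff_dvd j).mpr hj, sub_self] at h
  exact (mul_eq_zero.mp h).resolve_right (sub_ne_zero.mpr (hζ.ne_one hn))

theorem commute_pow_of_isPrimitiveRoot {R A : Type*} [CommRing R] [IsDomain R] [Ring A]
    [Algebra R A] {w u d : A} {c : R} {n j : ℕ} (hc : IsPrimitiveRoot c n) (hn : 1 < n)
    (h : w * u = c • (u * w) + d) (hd : Commute d u) (hj : n ∣ j) : Commute w (u ^ j) :=
  commute_pow_of_mul_eq_smul_add h hd ((hc.pow_eq_one_iff_dvd j).mpr hj)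
    (hc.geom_sum_eq_zero_of_dvd hn hj)

theorem Algebra.mem_center_of_adjoin_eq_top {R A : Type*} [CommSemiring R] [Semiring A]
    [Algebra R A] {s : Set A} (hs : adjoin R s = ⊤) {z : A} (hz : ∀ x ∈ s, Commute x z) :
    z ∈ Set.center A := by
  refine Semigroup.mem_center_iff.mpr fun g => ?_
  have hg : g ∈ adjoin R s := hs ▸ Algebra.mem_top
  exact (adjoin_le_centralizer_centralizer R s hg z
    (Subalgebra.mem_centralizer_iff R |>.mpr hz)).symm

section Relations

variable (k : Type*) [Field k] (q : k) (f : Polynomial k)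

theorem Bu_mul_Bv : Bu k q f * Bv k q f = q • (Bv k q f * Bu k q f) := by
  simpa [Bu, Bv] using RingQuot.mkAlgHom_rel k (BRel.uv (k := k) (q := q) (f := f))

theorem Bw_mul_Bu : Bw k q f * Bu k q f = q • (Bu k q f * Bw k q f) + aeval (Bv k q f) f := by
  simpa [Bu, Bv, Bw, ← aeval_algHom_apply] using
    RingQuot.mkAlgHom_rel k (BRel.wu (k := k) (q := q) (f := f))

theorem Bw_mul_Bv :
    Bw k q f * Bv k q f = q⁻¹ • (Bv k q f * Bw k q f) + aeval (Bu k q f) f := by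
  simpa [Bu, Bv, Bw, ← aeval_algHom_apply] using
    RingQuot.mkAlgHom_rel k (BRel.wv (k := k) (q := q) (f := f))

theorem Bv_mul_Bu (hq0 : q ≠ 0) :
    Bv k q f * Bu k q f = q⁻¹ • (Bu k q f * Bv k q f) := by
  rw [Bu_mul_Bv, smul_smul, inv_mul_cancel₀ hq0, one_smul]

theorem adjoin_Bu_Bv_Bw : Algebra.adjoin k {Bu k q f, Bv k q f, Bw k q f} = ⊤ := by
  have hrange : {Bu k q f, Bv k q f, Bw k q f} =
      RingQuot.mkAlgHom k (BRel k q f) '' Set.range (ι k) := by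
    ext x
    simp [Bu, Bv, Bw, Fin.exists_fin_succ, eq_comm]
  rw [hrange, ← AlgHom.map_adjoin, adjoin_range_ι, Algebra.map_top, AlgHom.range_eq_top]
  exact RingQuot.mkAlgHom_surjective k _

end Relations

section Center

variable {k : Type*} [Field k] {q : k} {f : Polynomial k} {n : ℕ}

theorem commute_Bu_aeval_Bv (hq : IsPrimitiveRoot q n) (hn : 1 < n)
    (hf : ∀ j ∈ f.support, n ∣ j) : Commute (Bu k q f) (aeval (Bv k q f) f) :=
  commute_aeval_of_forall_mem_support fun j hj =>
    commute_pow_of_isPrimitiveRoot hq hn (by rw [add_zero]; exact Bu_mul_Bv k q f)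
      (Commute.zero_left _) (hf j hj)

theorem commute_Bv_aeval_Bu (hq0 : q ≠ 0) (hq : IsPrimitiveRoot q n) (hn : 1 < n)
    (hf : ∀ j ∈ f.support, n ∣ j) : Commute (Bv k q f) (aeval (Bu k q f) f) :=
  commute_aeval_of_forall_mem_support fun j hj =>
    commute_pow_of_isPrimitiveRoot hq.inv hn (by rw [add_zero]; exact Bv_mul_Bu k q f hq0)
      (Commute.zero_left _) (hf j hj)

theorem aeval_Bu_mem_center (hq0 : q ≠ 0) (hq : IsPrimitiveRoot q n) (hn : 1 < n)
    (hf : ∀ j ∈ f.support, n ∣ j) : aeval (Bu k q f) f ∈ Set.center (BAlg k q f) := by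
  refine Algebra.mem_center_of_adjoin_eq_top (adjoin_Bu_Bv_Bw k q f) ?_
  simp only [Set.mem_insert_iff, Set.mem_singleton_iff, forall_eq_or_imp, forall_eq]
  refine ⟨commute_aeval_of_forall_mem_support fun j _ => Commute.self_pow _ j,
    commute_Bv_aeval_Bu hq0 hq hn hf,
    commute_aeval_of_forall_mem_support fun j hj => ?_⟩
  exact commute_pow_of_isPrimitiveRoot hq hn (Bw_mul_Bu k q f)
    (commute_Bu_aeval_Bv hq hn hf).symm (hf j hj)

theorem aeval_Bv_mem_center (hq0 : q ≠ 0) (hq : IsPrimitiveRoot q n) (hn : 1 < n)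
    (hf : ∀ j ∈ f.support, n ∣ j) : aeval (Bv k q f) f ∈ Set.center (BAlg k q f) := by
  refine Algebra.mem_center_of_adjoin_eq_top (adjoin_Bu_Bv_Bw k q f) ?_
  simp only [Set.mem_insert_iff, Set.mem_singleton_iff, forall_eq_or_imp, forall_eq]
  refine ⟨commute_Bu_aeval_Bv hq hn hf,
    commute_aeval_of_forall_mem_support fun j _ => Commute.self_pow _ j,
    commute_aeval_of_forall_mem_support fun j hj => ?_⟩
  exact commute_pow_of_isPrimitiveRoot hq.inv hn (Bw_mul_Bv k q f)
    (commute_Bv_aeval_Bu hq0 hq hn hf).symm (hf j hj)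

end Center

/-- `single (a, b) 1` is the monomial `u^a v^b` of the quantum plane `k_q[u, v]`, i.e. of the
left module `B_q(f) / B_q(f) w`: `u` and `v` act by left multiplication and `w` by the
`q`-skew derivation `δ` with `δ u = f(v)`, `δ v = f(u)`. -/
abbrev QuantumPlane (k : Type*) [Field k] := (ℕ × ℕ) →₀ k

namespace QuantumPlane

variable {k : Type*} [Field k] (q : k) (f : Polynomial k)

/- For `f = t^j`: `δ(u^a) = derivCoeffU q j a • u^(a-1) v^j` and
`δ(v^b) = derivCoeffV q j b • u^j v^(b-1)`. Both vanish at `0`, which absorbs the truncated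
subtractions `a - 1`, `b - 1` in `qDeriv`. -/
def derivCoeffU (j : ℕ) : ℕ → k
  | 0 => 0
  | a + 1 => q * derivCoeffU j a + q⁻¹ ^ (a * j)

def derivCoeffV (j : ℕ) : ℕ → k
  | 0 => 0
  | b + 1 => q⁻¹ ^ (j + 1) * derivCoeffV j b + 1

def mulU : QuantumPlane k →ₗ[k] QuantumPlane k :=
  Finsupp.linearCombination k fun p => Finsupp.single (p.1 + 1, p.2) 1

def mulV : QuantumPlane k →ₗ[k] QuantumPlane k :=
  Finsupp.linearCombination k fun p => Finsupp.single (p.1, p.2 + 1) (q⁻¹ ^ p.1)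

def qDeriv : QuantumPlane k →ₗ[k] QuantumPlane k :=
  Finsupp.linearCombination k fun p =>
    ∑ j ∈ f.support, f.coeff j •
      (derivCoeffU q j p.1 • Finsupp.single (p.1 - 1, p.2 + j) 1 +
        (q ^ p.1 * derivCoeffV q j p.2) • Finsupp.single (p.1 + j, p.2 - 1) (1 : k))

@[simp] theorem mulU_single (a b : ℕ) (s : k) :
    mulU (Finsupp.single (a, b) s) = Finsupp.single (a + 1, b) s := by
  simp [mulU, Finsupp.linearCombination_single, Finsupp.smul_single]

theorem mulV_single (a b : ℕ) (s : k) :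
    mulV q (Finsupp.single (a, b) s) = Finsupp.single (a, b + 1) (s * q⁻¹ ^ a) := by
  simp [mulV, Finsupp.linearCombination_single, Finsupp.smul_single]

@[simp] theorem mulV_single_one (a b : ℕ) :
    mulV q (Finsupp.single (a, b) 1) = q⁻¹ ^ a • Finsupp.single (a, b + 1) 1 := by
  rw [mulV_single, Finsupp.smul_single, smul_eq_mul, mul_one, one_mul]

theorem qDeriv_single (a b : ℕ) (s : k) :
    qDeriv q f (Finsupp.single (a, b) s) =
      s • ∑ j ∈ f.support, f.coeff j •
        (derivCoeffU q j a • Finsupp.single (a - 1, b + j) 1 +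
          (q ^ a * derivCoeffV q j b) • Finsupp.single (a + j, b - 1) (1 : k)) := by
  simp [qDeriv, Finsupp.linearCombination_single]

theorem mulU_pow_single (j a b : ℕ) (s : k) :
    (mulU ^ j : Module.End k (QuantumPlane k)) (Finsupp.single (a, b) s) =
      Finsupp.single (a + j, b) s := by
  induction j with
  | zero => simp
  | succ j ih => rw [pow_succ', Module.End.mul_apply, ih, mulU_single, add_assoc]

theorem mulV_pow_single_one (j a b : ℕ) :
    (mulV q ^ j) (Finsupp.single (a, b) 1) = q⁻¹ ^ (a * j) • Finsupp.single (a, b + j) 1 := by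
  induction j with
  | zero => simp
  | succ j ih =>
    rw [pow_succ', Module.End.mul_apply, ih, map_smul, mulV_single_one, smul_smul, ← pow_add,
      mul_add_one, add_assoc]

theorem mulU_mul_mulV (hq0 : q ≠ 0) : mulU * mulV q = q • (mulV q * mulU) := by
  refine Finsupp.basisSingleOne.ext fun ⟨a, b⟩ => ?_
  simp only [Finsupp.coe_basisSingleOne, Module.End.mul_apply, LinearMap.smul_apply,
    mulV_single, mulU_single, Finsupp.smul_single, smul_eq_mul, one_mul]
  rw [pow_succ, mul_left_comm, mul_inv_cancel₀ hq0, mul_one]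

theorem qDeriv_mul_mulU :
    qDeriv q f * mulU = q • (mulU * qDeriv q f) + aeval (mulV q) f := by
  refine Finsupp.basisSingleOne.ext fun ⟨a, b⟩ => ?_
  simp only [Finsupp.coe_basisSingleOne, Module.End.mul_apply, LinearMap.add_apply,
    LinearMap.smul_apply, mulU_single, qDeriv_single, aeval_endomorphism, Polynomial.sum_def,
    mulV_pow_single_one, one_smul, map_sum, map_smul, map_add, smul_sum, ← sum_add_distrib]
  refine sum_congr rfl fun j _ => ?_
  rcases a with _ | a
  · simp only [derivCoeffU, zero_smul, zero_add, mul_zero, zero_mul, pow_zero, one_mul,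
      Nat.zero_sub, pow_one, add_comm 1 j]
    module
  · simp only [derivCoeffU, Nat.add_sub_cancel]
    rw [show a + 1 + 1 + j = a + 1 + j + 1 by omega, show (a + 1) * j = a * j + j by ring,
      pow_add]
    module

theorem qDeriv_mul_mulV (hq0 : q ≠ 0) :
    qDeriv q f * mulV q = q⁻¹ • (mulV q * qDeriv q f) + aeval mulU f := by
  refine Finsupp.basisSingleOne.ext fun ⟨a, b⟩ => ?_
  simp only [Finsupp.coe_basisSingleOne, Module.End.mul_apply, LinearMap.add_apply,
    LinearMap.smul_apply, mulV_single_one, qDeriv_single, aeval_endomorphism, Polynomial.sum_def,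
    mulU_pow_single, one_smul, map_sum, map_smul, map_add, smul_sum,
    ← sum_add_distrib]
  refine sum_congr rfl fun j _ => ?_
  rw [show b + 1 + j = b + j + 1 by omega]
  rcases a with _ | a <;> rcases b with _ | b <;>
    simp only [derivCoeffU, derivCoeffV, zero_smul, smul_zero, zero_add, add_zero, mul_zero,
      Nat.zero_sub, Nat.add_sub_cancel, pow_zero, one_mul, one_smul] <;>
    match_scalars <;> (simp only [inv_pow]; field_simp; try ring)

variable {q f}

theorem aeval_mulU_single_zero (b : ℕ) :
    aeval mulU f (Finsupp.single (0, b) (1 : k)) =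
      ∑ j ∈ f.support, Finsupp.single (j, b) (f.coeff j) := by
  simp only [aeval_endomorphism, Polynomial.sum_def, mulU_pow_single,
    zero_add, Finsupp.smul_single, smul_eq_mul, mul_one]

theorem pow_eq_one_of_commute_mulV_aeval_mulU (h : Commute (mulV q) (aeval mulU f)) {j : ℕ}
    (hj : j ∈ f.support) : q ^ j = 1 := by
  have h00 := congr($(h.eq) (Finsupp.single (0, 0) 1) (j, 1))
  simp only [Module.End.mul_apply, aeval_mulU_single_zero, mulV_single, pow_zero, mul_one,
    zero_add, map_sum, Finsupp.finsetSum_apply, Finsupp.single_apply, Prod.mk.injEq,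
    and_true, sum_ite_eq', hj, if_true] at h00
  rw [mul_eq_left₀ (mem_support_iff.mp hj), inv_pow, inv_eq_one] at h00
  exact h00

end QuantumPlane

open QuantumPlane in
def BAlg.toEndQuantumPlane (k : Type*) [Field k] {q : k} (f : Polynomial k) (hq0 : q ≠ 0) :
    BAlg k q f →ₐ[k] Module.End k (QuantumPlane k) :=
  RingQuot.liftAlgHom k ⟨FreeAlgebra.lift k ![mulU, mulV q, qDeriv q f], fun x y r => by
    cases r <;>
      simp only [map_mul, map_add, map_smul, ← aeval_algHom_apply, FreeAlgebra.lift_ι_apply] <;>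
      simp [mulU_mul_mulV q hq0, qDeriv_mul_mulU, qDeriv_mul_mulV q f hq0]⟩

theorem pow_eq_one_of_commute_Bv_aeval_Bu {k : Type*} [Field k] {q : k} {f : Polynomial k}
    (hq0 : q ≠ 0) (h : Commute (Bv k q f) (aeval (Bu k q f) f)) {j : ℕ} (hj : j ∈ f.support) :
    q ^ j = 1 := by
  refine QuantumPlane.pow_eq_one_of_commute_mulV_aeval_mulU ?_ hj
  simpa [Bu, Bv, BAlg.toEndQuantumPlane, ← aeval_algHom_apply] using
    h.map (BAlg.toEndQuantumPlane k f hq0)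

theorem stmt5_general (k : Type*) [Field k]
    (q : k) (hq0 : q ≠ 0) (n : ℕ) (hn : 1 < n) (hq : IsPrimitiveRoot q n)
    (f : Polynomial k) :
    (aeval (Bu k q f) f ∈ Set.center (BAlg k q f) ∧
        aeval (Bv k q f) f ∈ Set.center (BAlg k q f)) ↔
      ∀ j ∈ f.support, n ∣ j := by
  refine ⟨fun ⟨hu, _⟩ j hj => ?_, fun hf =>
    ⟨aeval_Bu_mem_center hq0 hq hn hf, aeval_Bv_mem_center hq0 hq hn hf⟩⟩
  exact (hq.pow_eq_one_iff_dvd j).mp <|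
    pow_eq_one_of_commute_Bv_aeval_Bu hq0 (Semigroup.mem_center_iff.mp hu _) hj

/-- for `q` a primitive `n`-th root of unity with `n > 1` and
`f ≠ 0`, the elements `f(u)` and `f(v)` are both central in `B_q(f)` iff
`n ∣ j` for every `j ∈ supp(f)`. -/
theorem stmt5 (k : Type*) [Field k] [IsAlgClosed k] [CharZero k]
    (q : k) (hq0 : q ≠ 0) (n : ℕ) (hn : 1 < n) (hq : IsPrimitiveRoot q n)
    (f : Polynomial k) (hf : f ≠ 0) :
    (aeval (Bu k q f) f ∈ Set.center (BAlg k q f) ∧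
        aeval (Bv k q f) f ∈ Set.center (BAlg k q f)) ↔
      ∀ j ∈ f.support, n ∣ j :=
  stmt5_general k q hq0 n hn hq f
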